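/- arXiv:1407.2367 — 2 statements merged into one kernel-verified Lean document; each statement's English description precedes it below -/
import Mathlib

section
/- Fix integers p ≥ 1 and N ≥ 1, a partition x_0 < x_1 < ⋯ < x_N, data y_{n,2k} ∈ ℝ (0 ≤ n ≤ N, 0 ≤ k ≤ p), and an integer k with 1 ≤ k ≤ p. Let μ = min_{1 ≤ n ≤ N} a_n, let α ∈ Θ_{2p} with |α|_∞ < μ^{2k}, let ℓ_α be a 2p-times continuously differentiable function on [x_0,x_N] satisfying ℓ_α(L_n(x)) = α_n ℓ_α(x) + q_n(α_n, x) for all x ∈ [x_0,x_N] and 1 ≤ n ≤ N, and let φ be the classical Lidstone interpolation function for the data. Then max_{1 ≤ n ≤ N} sup_{x ∈ (x_{n−1},x_n)} |ℓ_α^{(2k)}(x) − φ^{(2k)}(x)| ≤ (|α|_∞ / (μ^{2k} − |α|_∞)) · ( max_{1 ≤ n ≤ N} sup_{x ∈ (x_{n−1},x_n)} |φ^{(2k)}(x)| + M_{2k,2p} ), where |α|_∞ = max_n |α_n| and M_{2k,2p} = (2ρπ/3) Σ_{l=0}^{p−k} ((x_N − x_0)/π)^{2l}. -/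
/-!
Write `a_n = (x_n - x_{n-1}) / (x_N - x_0)` and let `Ψ_n` be the Lidstone interpolant on the
`n`-th piece (so `φ = Ψ_n` there) and `W` the one on `[x_0, x_N]` with the end data
`y_{0,2l}, y_{N,2l}`. A polynomial of degree `≤ 2p + 1` is fixed by its even derivatives up to
order `2p` at two points, hence `q_n = Ψ_n ∘ L_n - α_n W`, and the functional equation becomes
`(ℓ_α - Ψ_n) ∘ L_n = α_n (ℓ_α - W)`. Differentiating `2k` times,
`a_n^{2k} (ℓ_α - φ)^{(2k)}(L_n t) = α_n (ℓ_α^{(2k)} - W^{(2k)})(t)`. Splitting the right side at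
the piece containing `t`, the supremum `E` of the left errors satisfies
`μ^{2k} E ≤ |α|_∞ (E + sup |φ^{(2k)}| + sup |W^{(2k)}|)`, which is the claim once
`|W^{(2k)}| ≤ M_{2k,2p}`; that bound comes from `|Λ_l| ≤ (π/3) π^{-2l}` on `[0, 1]`, proved by
comparing `Λ_l` with multiples of `sin (π x)` through the maximum principle for `u'' ≤ 0`.
-/

/-- The defining property of the sequence of Lidstone polynomial functions. -/
def LidstoneProp (Λ : ℕ → ℝ → ℝ) : Prop :=
  (∀ l : ℕ, ∃ P : Polynomial ℝ, ∀ x : ℝ, Λ l x = P.eval x) ∧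
  (∀ x : ℝ, Λ 0 x = x) ∧
  (∀ l : ℕ, (∀ x : ℝ, iteratedDeriv 2 (Λ (l + 1)) x = Λ l x) ∧
    Λ (l + 1) 0 = 0 ∧ Λ (l + 1) 1 = 0)

open Polynomial Set Real

namespace Polynomial

section Calculus

variable {𝕜 : Type*} [NontriviallyNormedField 𝕜]

theorem contDiff_eval (P : 𝕜[X]) (n : WithTop ℕ∞) : ContDiff 𝕜 n fun u => P.eval u := by
  simpa using P.contDiff_aeval (𝕜 := 𝕜) n

theorem iteratedDeriv_eval_eq (P : 𝕜[X]) (n : ℕ) :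
    iteratedDeriv n (fun t => P.eval t) = fun t => (derivative^[n] P).eval t := by
  induction n with
  | zero => rfl
  | succ n ih =>
    rw [iteratedDeriv_succ, ih, Function.iterate_succ_apply']
    funext t
    exact Polynomial.deriv _

theorem iteratedDerivWithin_eval_eq (P : 𝕜[X]) (n : ℕ) {s : Set 𝕜} (hs : UniqueDiffOn 𝕜 s)
    {t : 𝕜} (ht : t ∈ s) :
    iteratedDerivWithin n (fun u => P.eval u) s t = (derivative^[n] P).eval t := by
  rw [iteratedDerivWithin_eq_iteratedDeriv hs (P.contDiff_eval n).contDiffAt ht,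
    iteratedDeriv_eval_eq]

end Calculus

theorem iterate_derivative_comp_C_mul_X_add_C {R : Type*} [CommSemiring R] (Q : R[X]) (a b : R)
    (n : ℕ) :
    derivative^[n] (Q.comp (C a * X + C b)) =
      C (a ^ n) * (derivative^[n] Q).comp (C a * X + C b) := by
  induction n generalizing Q with
  | zero => simp
  | succ n ih =>
    rw [Function.iterate_succ_apply, derivative_comp]
    simp only [derivative_add, derivative_C_mul_X, derivative_C, add_zero,
      iterate_derivative_C_mul, ih, Function.iterate_succ_apply, ← mul_assoc, ← C_mul, pow_succ']

theorem eq_zero_of_iterate_derivative_two_mul_eval_eq_zero {K : Type*} [Field K] [CharZero K]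
    {a b : K} (hab : a ≠ b) :
    ∀ {p : ℕ} {R : K[X]}, R.natDegree ≤ 2 * p + 1 →
      (∀ l ≤ p, (derivative^[2 * l] R).eval a = 0 ∧ (derivative^[2 * l] R).eval b = 0) →
      R = 0
  | p, R, hdeg, hR => by
    classical
    have hlin : R.natDegree ≤ 1 := by
      cases p with
      | zero => simpa using hdeg
      | succ p =>
        have h2 : derivative^[2] R = 0 :=
          eq_zero_of_iterate_derivative_two_mul_eval_eq_zero hab (p := p)
            ((natDegree_iterate_derivative R 2).trans (by omega))
            fun l hl => by
              simpa only [← Function.iterate_add_apply, show 2 * l + 2 = 2 * (l + 1) by ring]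
                using hR (l + 1) (by omega)
        have := derivative_eq_zero.mp h2
        rw [natDegree_derivative] at this
        omega
    refine eq_zero_of_natDegree_lt_card_of_eval_eq_zero' R {a, b} ?_ ?_
    · simpa using hR 0 (Nat.zero_le _)
    · rw [Finset.card_pair hab]; omega

end Polynomial

section IteratedDerivWithin

variable {𝕜 F : Type*} [NontriviallyNormedField 𝕜] [NormedAddCommGroup F] [NormedSpace 𝕜 F]
  {s : Set 𝕜} {n : ℕ}

theorem iteratedDerivWithin_comp_mul_add {f : 𝕜 → F} (hs : UniqueDiffOn 𝕜 s)
    (hf : ContDiffOn 𝕜 n f s) {a b : 𝕜} (hmaps : MapsTo (fun z => a * z + b) s s) {t : 𝕜}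
    (ht : t ∈ s) :
    iteratedDerivWithin n (fun z => f (a * z + b)) s t =
      a ^ n • iteratedDerivWithin n f s (a * t + b) := by
  induction n generalizing t with
  | zero => simp
  | succ n ih =>
    have hcongr : s.EqOn (iteratedDerivWithin n (fun z => f (a * z + b)) s)
        (fun z => a ^ n • iteratedDerivWithin n f s (a * z + b)) := fun z hz => ih hf.of_succ hz
    have hdiff : DifferentiableWithinAt 𝕜 (iteratedDerivWithin n f s) s (a * t + b) :=
      hf.differentiableOn_iteratedDerivWithin (Nat.cast_lt.mpr n.lt_succ_self) hs _ (hmaps ht)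
    have haff : HasDerivWithinAt (fun z => a * z + b) a s t := by
      simpa using (((hasDerivAt_id t).const_mul a).add_const b).hasDerivWithinAt
    have hcomp : HasDerivWithinAt (fun z => a ^ n • iteratedDerivWithin n f s (a * z + b))
        (a ^ n • a • iteratedDerivWithin (n + 1) f s (a * t + b)) s t := by
      rw [iteratedDerivWithin_succ]
      exact (hdiff.hasDerivWithinAt.scomp t haff hmaps).const_smul (a ^ n)
    rw [iteratedDerivWithin_succ, derivWithin_congr hcongr (ih hf.of_succ ht),
      hcomp.derivWithin (hs t ht), smul_smul, pow_succ]

end IteratedDerivWithin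

section FunctionalEquation

variable {s : Set ℝ} (hs : UniqueDiffOn ℝ s) {n : ℕ}
include hs

theorem iteratedDerivWithin_sub_eval {f : ℝ → ℝ} (hf : ContDiffOn ℝ n f s) (Q : ℝ[X]) {t : ℝ}
    (ht : t ∈ s) :
    iteratedDerivWithin n (fun z => f z - Q.eval z) s t =
      iteratedDerivWithin n f s t - (derivative^[n] Q).eval t := by
  rw [← iteratedDerivWithin_eval_eq Q n hs ht]
  exact iteratedDerivWithin_sub ht hs (hf t ht) (Q.contDiff_eval n).contDiffWithinAt

theorem iteratedDerivWithin_sub_eval_comp_mul_add {ℓ : ℝ → ℝ} (hℓ : ContDiffOn ℝ n ℓ s)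
    {a b β : ℝ} (hmaps : MapsTo (fun z => a * z + b) s s) {Ψ W : ℝ[X]}
    (hfe : ∀ t ∈ s, ℓ (a * t + b) = β * ℓ t + (Ψ.eval (a * t + b) - β * W.eval t))
    {t : ℝ} (ht : t ∈ s) :
    a ^ n * (iteratedDerivWithin n ℓ s (a * t + b) - (derivative^[n] Ψ).eval (a * t + b)) =
      β * (iteratedDerivWithin n ℓ s t - (derivative^[n] W).eval t) := by
  have he : EqOn (fun z => ℓ (a * z + b) - Ψ.eval (a * z + b))
      (fun z => β * (ℓ z - W.eval z)) s :=
    fun z hz => by simp only [hfe z hz]; ring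
  calc a ^ n * (iteratedDerivWithin n ℓ s (a * t + b) - (derivative^[n] Ψ).eval (a * t + b))
      = a ^ n * iteratedDerivWithin n (fun z => ℓ z - Ψ.eval z) s (a * t + b) := by
        rw [iteratedDerivWithin_sub_eval hs hℓ Ψ (hmaps ht)]
    _ = iteratedDerivWithin n (fun z => ℓ (a * z + b) - Ψ.eval (a * z + b)) s t :=
        (iteratedDerivWithin_comp_mul_add hs (hℓ.sub (Ψ.contDiff_eval n).contDiffOn) hmaps
          ht).symm
    _ = β * (iteratedDerivWithin n ℓ s t - (derivative^[n] W).eval t) := by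
        rw [iteratedDerivWithin_congr he ht, iteratedDerivWithin_const_mul_field,
          iteratedDerivWithin_sub_eval hs hℓ W ht]

end FunctionalEquation

theorem nonneg_of_iteratedDeriv_two_nonpos {h : ℝ → ℝ} (hh : ContDiff ℝ 2 h) {a b : ℝ}
    (h2 : ∀ u ∈ Ioo a b, iteratedDeriv 2 h u ≤ 0) (ha : 0 ≤ h a) (hb : 0 ≤ h b) :
    ∀ u ∈ Icc a b, 0 ≤ h u := by
  have hconc : ConcaveOn ℝ (Icc a b) h := by
    refine concaveOn_of_deriv2_nonpos (convex_Icc a b) hh.continuous.continuousOn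
      (hh.differentiable two_ne_zero).differentiableOn ?_ ?_
    · exact ((contDiff_succ_iff_deriv.mp hh).2.2.differentiable one_ne_zero).differentiableOn
    · simpa [interior_Icc, ← iteratedDeriv_eq_iterate] using h2
  intro u hu
  have hab : a ≤ b := hu.1.trans hu.2
  exact (le_min ha hb).trans (hconc.min_le_of_mem_Icc (left_mem_Icc.mpr hab)
    (right_mem_Icc.mpr hab) hu)

theorem abs_le_of_abs_iteratedDeriv_two_le {f g : ℝ → ℝ} (hf : ContDiff ℝ 2 f)
    (hg : ContDiff ℝ 2 g) {a b : ℝ}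
    (h2 : ∀ u ∈ Ioo a b, |iteratedDeriv 2 f u| ≤ -iteratedDeriv 2 g u)
    (ha : |f a| ≤ g a) (hb : |f b| ≤ g b) :
    ∀ u ∈ Icc a b, |f u| ≤ g u := by
  intro u hu
  have hsub := nonneg_of_iteratedDeriv_two_nonpos (h := g - f) (hg.sub hf)
    (fun u hu => by
      rw [iteratedDeriv_sub hg.contDiffAt hf.contDiffAt]
      linarith [neg_abs_le (iteratedDeriv 2 f u), h2 u hu])
    (sub_nonneg.mpr ((le_abs_self _).trans ha)) (sub_nonneg.mpr ((le_abs_self _).trans hb)) u hu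
  have hadd := nonneg_of_iteratedDeriv_two_nonpos (h := g + f) (hg.add hf)
    (fun u hu => by
      rw [iteratedDeriv_add hg.contDiffAt hf.contDiffAt]
      linarith [le_abs_self (iteratedDeriv 2 f u), h2 u hu])
    (neg_le_iff_add_nonneg'.mp ((neg_abs_le _).trans' (neg_le_neg ha)))
    (neg_le_iff_add_nonneg'.mp ((neg_abs_le _).trans' (neg_le_neg hb))) u hu
  simp only [Pi.sub_apply, Pi.add_apply] at hsub hadd
  exact abs_le.mpr ⟨by linarith, by linarith⟩

theorem mul_mul_one_sub_le_sin {w : ℝ} (h0 : 0 ≤ w) (h1 : w ≤ 1) :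
    π * w * (1 - w) ≤ sin (π * w) := by
  have half : ∀ w : ℝ, 0 ≤ w → w ≤ 1 / 2 → π * w * (1 - w) ≤ sin (π * w) := by
    intro w h0 h1
    have hcube := sin_ge_sub_cube (mul_nonneg pi_pos.le h0)
    have hπ2 : π ^ 2 * w ≤ 6 := by nlinarith [pi_lt_d2, pi_pos]
    nlinarith [mul_le_mul_of_nonneg_left hπ2 (by positivity : 0 ≤ π * w ^ 2)]
  rcases le_total w (1 / 2) with hw | hw
  · exact half w h0 hw
  · have := half (1 - w) (by linarith) (by linarith)
    rw [mul_sub π, mul_one, sin_pi_sub] at this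
    linarith

theorem iteratedDeriv_two_const_mul_sin_mul (c r u : ℝ) :
    iteratedDeriv 2 (fun w => c * sin (r * w)) u = -(c * r ^ 2 * sin (r * u)) := by
  rw [iteratedDeriv_const_mul_field, iteratedDeriv_comp_const_mul contDiff_sin]
  have hsin : iteratedDeriv 2 sin = -sin := by simpa using iteratedDeriv_even_sin 1
  simp only [hsin, Pi.neg_apply]
  ring

structure IsLidstoneFamily (P : ℕ → ℝ[X]) : Prop where
  zero_eq_X : P 0 = X
  iterate_derivative_two_succ : ∀ l, derivative^[2] (P (l + 1)) = P l
  eval_succ_zero : ∀ l, (P (l + 1)).eval 0 = 0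
  eval_succ_one : ∀ l, (P (l + 1)).eval 1 = 0

theorem LidstoneProp.exists_isLidstoneFamily {Λ : ℕ → ℝ → ℝ} (hΛ : LidstoneProp Λ) :
    ∃ P : ℕ → ℝ[X], IsLidstoneFamily P ∧ Λ = fun l t => (P l).eval t := by
  obtain ⟨hpoly, h0, hstep⟩ := hΛ
  choose P hP using hpoly
  obtain rfl : Λ = fun l t => (P l).eval t := funext fun l => funext (hP l)
  refine ⟨P, ⟨Polynomial.funext fun t => by simpa using h0 t, fun l => ?_,
    fun l => (hstep l).2.1, fun l => (hstep l).2.2⟩, rfl⟩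
  exact Polynomial.funext fun t => by simpa [iteratedDeriv_eval_eq] using (hstep l).1 t

namespace IsLidstoneFamily

variable {P : ℕ → ℝ[X]} (hP : IsLidstoneFamily P)
include hP

theorem natDegree_le (l : ℕ) : (P l).natDegree ≤ 2 * l + 1 := by
  induction l with
  | zero => simp [hP.zero_eq_X]
  | succ l ih =>
    have : (P (l + 1)).natDegree - 1 - 1 ≤ 2 * l + 1 := by
      simpa [natDegree_derivative, ← hP.iterate_derivative_two_succ l] using ih
    omega

theorem iteratedDeriv_two_eval (l : ℕ) (u : ℝ) :
    iteratedDeriv 2 (fun t => (P (l + 1)).eval t) u = (P l).eval u := by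
  rw [iteratedDeriv_eval_eq, hP.iterate_derivative_two_succ]

/-- Comparison with multiples of `sin (π w)` through the maximum principle. In the base case
`|P 1 w| ≤ (w - w ^ 3) / 6` and `sin (π w) / (3 π)` agree to first order at `w = 1`, so the
sharp bound `π w (1 - w) ≤ sin (π w)` is needed. -/
theorem abs_eval_le_mul_sin (l : ℕ) :
    ∀ w ∈ Icc (0 : ℝ) 1, |(P (l + 1)).eval w| ≤ π / 3 * (π ^ 2)⁻¹ ^ (l + 1) * sin (π * w) := by
  have hπ := pi_pos
  induction l with
  | zero =>
    intro w hw
    have hcubic : |(P 1).eval w| ≤ (C (6⁻¹ : ℝ) * (X - X ^ 3)).eval w := by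
      refine abs_le_of_abs_iteratedDeriv_two_le ((P 1).contDiff_eval 2)
        ((C (6⁻¹ : ℝ) * (X - X ^ 3)).contDiff_eval 2) (fun u hu => ?_)
        (by simp [hP.eval_succ_zero]) (by simp [hP.eval_succ_one]) w hw
      rw [hP.iteratedDeriv_two_eval, hP.zero_eq_X, iteratedDeriv_eval_eq, eval_X,
        abs_of_pos hu.1]
      simp only [iterate_derivative_C_mul, iterate_map_sub, iterate_derivative_X one_lt_two,
        iterate_derivative_X_pow_eq_C_mul, eval_mul, eval_sub, eval_C, eval_pow, eval_X, eval_zero]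
      norm_num [Nat.descFactorial, ← mul_assoc]
    simp only [eval_mul, eval_sub, eval_C, eval_pow, eval_X] at hcubic
    have hsin := mul_mul_one_sub_le_sin hw.1 hw.2
    have hw3 : 0 ≤ w * (1 - w) * (1 - w) :=
      mul_nonneg (mul_nonneg hw.1 (sub_nonneg.mpr hw.2)) (sub_nonneg.mpr hw.2)
    refine hcubic.trans ?_
    rw [zero_add, pow_one, show π / 3 * (π ^ 2)⁻¹ * sin (π * w) = sin (π * w) / (3 * π) by
      field_simp, le_div_iff₀ (by positivity)]
    nlinarith
  | succ l ih =>
    refine abs_le_of_abs_iteratedDeriv_two_le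
      (g := fun w => π / 3 * (π ^ 2)⁻¹ ^ (l + 2) * sin (π * w))
      ((P (l + 2)).contDiff_eval 2) (by fun_prop) (fun u hu => ?_)
      (by simp [hP.eval_succ_zero]) (by simp [hP.eval_succ_one])
    rw [hP.iteratedDeriv_two_eval, iteratedDeriv_two_const_mul_sin_mul]
    convert ih u (Ioo_subset_Icc_self hu) using 1
    rw [neg_neg, pow_succ _ (l + 1)]
    field_simp

theorem abs_eval_le (l : ℕ) : ∀ w ∈ Icc (0 : ℝ) 1, |(P l).eval w| ≤ π / 3 * (π ^ 2)⁻¹ ^ l := by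
  intro w hw
  cases l with
  | zero =>
    simp only [hP.zero_eq_X, eval_X, abs_of_nonneg hw.1, pow_zero, mul_one]
    linarith [hw.2, pi_gt_three]
  | succ l =>
    exact (hP.abs_eval_le_mul_sin l w hw).trans
      (mul_le_of_le_one_right (by positivity) (sin_le_one _))

end IsLidstoneFamily

/-- The Lidstone interpolation polynomial on `[u, v]` whose derivatives of order `2 l` take the
values `c l` at `u` and `d l` at `v`. -/
noncomputable def lidstoneInterp (P : ℕ → ℝ[X]) (p : ℕ) (u v : ℝ) (c d : ℕ → ℝ) : ℝ[X] :=
  ∑ l ∈ Finset.range (p + 1),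
    (C (c l) * (P l).comp (C (-(v - u)⁻¹) * X + C (v * (v - u)⁻¹)) +
      C (d l) * (P l).comp (C (v - u)⁻¹ * X + C (-u * (v - u)⁻¹))) * C ((v - u) ^ (2 * l))

section LidstoneInterp

variable {P : ℕ → ℝ[X]} {p : ℕ} {u v : ℝ} {c d : ℕ → ℝ}

theorem eval_lidstoneInterp (t : ℝ) :
    (lidstoneInterp P p u v c d).eval t = ∑ l ∈ Finset.range (p + 1),
      (c l * (P l).eval ((v - t) / (v - u)) + d l * (P l).eval ((t - u) / (v - u))) *
        (v - u) ^ (2 * l) := by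
  simp only [lidstoneInterp, eval_finsetSum, eval_mul, eval_add, eval_C, eval_comp, eval_X]
  congr! 5 <;> ring

variable (hP : IsLidstoneFamily P)
include hP

theorem natDegree_lidstoneInterp_le : (lidstoneInterp P p u v c d).natDegree ≤ 2 * p + 1 := by
  refine natDegree_sum_le_of_forall_le _ _ fun l hl => ?_
  have hl : l ≤ p := Nat.lt_succ_iff.mp (Finset.mem_range.mp hl)
  have hcomp : ∀ e a b : ℝ, (C e * (P l).comp (C a * X + C b)).natDegree ≤ 2 * p + 1 :=
    fun e a b => natDegree_C_mul_le _ _ |>.trans <| natDegree_comp_le.trans <|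
      (Nat.mul_le_mul (hP.natDegree_le l) natDegree_linear_le).trans (by omega)
  exact natDegree_mul_C_le _ _ |>.trans <|
    natDegree_add_le_of_degree_le (hcomp _ _ _) (hcomp _ _ _)

theorem iterate_derivative_two_lidstoneInterp (huv : u ≠ v) :
    derivative^[2] (lidstoneInterp P (p + 1) u v c d) =
      lidstoneInterp P p u v (fun l => c (l + 1)) (fun l => d (l + 1)) := by
  have hvu : v - u ≠ 0 := sub_ne_zero.mpr huv.symm
  rw [lidstoneInterp, iterate_derivative_sum, Finset.sum_range_succ']
  simp only [mul_comm _ (C ((v - u) ^ _)), iterate_derivative_C_mul, iterate_map_add,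
    iterate_derivative_comp_C_mul_X_add_C, hP.iterate_derivative_two_succ, hP.zero_eq_X,
    iterate_derivative_X one_lt_two, zero_comp, mul_zero, add_zero, lidstoneInterp]
  refine Finset.sum_congr rfl fun l _ => ?_
  simp only [← mul_assoc, ← C_mul, mul_add]
  congr 3 <;> field_simp <;> ring

theorem iterate_derivative_two_mul_lidstoneInterp (huv : u ≠ v) {j : ℕ} (hj : j ≤ p) :
    derivative^[2 * j] (lidstoneInterp P p u v c d) =
      lidstoneInterp P (p - j) u v (fun l => c (l + j)) (fun l => d (l + j)) := by
  induction j generalizing p c d with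
  | zero => rfl
  | succ j ih =>
    obtain ⟨p, rfl⟩ : ∃ p', p = p' + 1 := ⟨p - 1, by omega⟩
    rw [mul_add, mul_one, Function.iterate_add_apply,
      iterate_derivative_two_lidstoneInterp hP huv, ih (by omega), Nat.add_sub_add_right]
    rfl

theorem eval_lidstoneInterp_left (huv : u ≠ v) : (lidstoneInterp P p u v c d).eval u = c 0 := by
  have hvu : v - u ≠ 0 := sub_ne_zero.mpr huv.symm
  simp [eval_lidstoneInterp, Finset.sum_range_succ', div_self hvu, hP.eval_succ_zero,
    hP.eval_succ_one, hP.zero_eq_X]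

theorem eval_lidstoneInterp_right (huv : u ≠ v) : (lidstoneInterp P p u v c d).eval v = d 0 := by
  have hvu : v - u ≠ 0 := sub_ne_zero.mpr huv.symm
  simp [eval_lidstoneInterp, Finset.sum_range_succ', div_self hvu, hP.eval_succ_zero,
    hP.eval_succ_one, hP.zero_eq_X]

theorem eval_iterate_derivative_lidstoneInterp_left (huv : u ≠ v) {j : ℕ} (hj : j ≤ p) :
    (derivative^[2 * j] (lidstoneInterp P p u v c d)).eval u = c j := by
  rw [iterate_derivative_two_mul_lidstoneInterp hP huv hj, eval_lidstoneInterp_left hP huv,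
    zero_add]

theorem eval_iterate_derivative_lidstoneInterp_right (huv : u ≠ v) {j : ℕ} (hj : j ≤ p) :
    (derivative^[2 * j] (lidstoneInterp P p u v c d)).eval v = d j := by
  rw [iterate_derivative_two_mul_lidstoneInterp hP huv hj, eval_lidstoneInterp_right hP huv,
    zero_add]

theorem abs_eval_lidstoneInterp_le (huv : u < v) {ρ : ℝ} (hc : ∀ l ≤ p, |c l| ≤ ρ)
    (hd : ∀ l ≤ p, |d l| ≤ ρ) {t : ℝ} (ht : t ∈ Icc u v) :
    |(lidstoneInterp P p u v c d).eval t| ≤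
      2 * ρ * π / 3 * ∑ l ∈ Finset.range (p + 1), ((v - u) / π) ^ (2 * l) := by
  have hvu : 0 < v - u := sub_pos.mpr huv
  have hleft : (v - t) / (v - u) ∈ Icc (0 : ℝ) 1 :=
    ⟨div_nonneg (by linarith [ht.2]) hvu.le, div_le_one_of_le₀ (by linarith [ht.1]) hvu.le⟩
  have hright : (t - u) / (v - u) ∈ Icc (0 : ℝ) 1 :=
    ⟨div_nonneg (by linarith [ht.1]) hvu.le, div_le_one_of_le₀ (by linarith [ht.2]) hvu.le⟩
  rw [eval_lidstoneInterp, Finset.mul_sum]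
  refine (Finset.abs_sum_le_sum_abs _ _).trans (Finset.sum_le_sum fun l hl => ?_)
  have hl : l ≤ p := Nat.lt_succ_iff.mp (Finset.mem_range.mp hl)
  set B := π / 3 * (π ^ 2)⁻¹ ^ l
  have hρ : 0 ≤ ρ := (abs_nonneg _).trans (hc l hl)
  have hterm : |c l * (P l).eval ((v - t) / (v - u)) + d l * (P l).eval ((t - u) / (v - u))| ≤
      2 * ρ * B := by
    refine (abs_add_le _ _).trans ?_
    rw [abs_mul, abs_mul, two_mul, add_mul]
    exact add_le_add (mul_le_mul (hc l hl) (hP.abs_eval_le l _ hleft) (abs_nonneg _) hρ)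
      (mul_le_mul (hd l hl) (hP.abs_eval_le l _ hright) (abs_nonneg _) hρ)
  calc _ = |c l * (P l).eval ((v - t) / (v - u)) + d l * (P l).eval ((t - u) / (v - u))| *
        (v - u) ^ (2 * l) := by rw [abs_mul, abs_pow, abs_of_pos hvu]
    _ ≤ 2 * ρ * B * (v - u) ^ (2 * l) := by gcongr
    _ = _ := by simp only [B, div_pow, pow_mul π, inv_pow]; ring

theorem abs_eval_iterate_derivative_lidstoneInterp_le (huv : u < v) {ρ : ℝ}
    (hc : ∀ l ≤ p, |c l| ≤ ρ) (hd : ∀ l ≤ p, |d l| ≤ ρ) {k : ℕ} (hk : k ≤ p) {t : ℝ}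
    (ht : t ∈ Icc u v) :
    |(derivative^[2 * k] (lidstoneInterp P p u v c d)).eval t| ≤
      2 * ρ * π / 3 * ∑ l ∈ Finset.range (p - k + 1), ((v - u) / π) ^ (2 * l) := by
  rw [iterate_derivative_two_mul_lidstoneInterp hP huv.ne hk]
  exact abs_eval_lidstoneInterp_le hP huv (fun l hl => hc _ (by omega))
    (fun l hl => hd _ (by omega)) ht

theorem eq_eval_lidstoneInterp_comp_sub {q : ℝ → ℝ} {u' v' a b β : ℝ} {c' d' : ℕ → ℝ}
    (hq : ∃ Q : ℝ[X], Q.natDegree ≤ 2 * p + 1 ∧ ∀ t, q t = Q.eval t)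
    (hqd : ∀ l ≤ p, iteratedDeriv (2 * l) q u = a ^ (2 * l) * c' l - β * c l ∧
      iteratedDeriv (2 * l) q v = a ^ (2 * l) * d' l - β * d l)
    (huv : u ≠ v) (hu'v' : u' ≠ v') (hu' : a * u + b = u') (hv' : a * v + b = v') (t : ℝ) :
    q t = (lidstoneInterp P p u' v' c' d').eval (a * t + b) -
      β * (lidstoneInterp P p u v c d).eval t := by
  obtain ⟨Q, hQ, hqQ⟩ := hq
  obtain rfl : q = fun t => Q.eval t := funext hqQ
  simp only [iteratedDeriv_eval_eq] at hqd
  suffices Q = (lidstoneInterp P p u' v' c' d').comp (C a * X + C b) -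
      C β * lidstoneInterp P p u v c d by
    simp [this]
  refine sub_eq_zero.mp
    (eq_zero_of_iterate_derivative_two_mul_eval_eq_zero huv (p := p) ?_ fun l hl => ?_)
  · refine (natDegree_sub_le _ _).trans (max_le hQ ((natDegree_sub_le _ _).trans (max_le ?_ ?_)))
    · exact natDegree_comp_le.trans ((Nat.mul_le_mul (natDegree_lidstoneInterp_le hP)
        natDegree_linear_le).trans (by omega))
    · exact (natDegree_C_mul_le _ _).trans (natDegree_lidstoneInterp_le hP)
  · simp only [iterate_derivative_sub, iterate_derivative_C_mul,
      iterate_derivative_comp_C_mul_X_add_C, eval_sub, eval_mul, eval_C, eval_comp, eval_add,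
      eval_X, hu', hv', (hqd l hl).1, (hqd l hl).2,
      eval_iterate_derivative_lidstoneInterp_left hP hu'v' hl,
      eval_iterate_derivative_lidstoneInterp_right hP hu'v' hl,
      eval_iterate_derivative_lidstoneInterp_left hP huv hl,
      eval_iterate_derivative_lidstoneInterp_right hP huv hl, sub_self, and_self]

end LidstoneInterp

theorem affine_apply_left {u v u' v' : ℝ} (huv : u ≠ v) :
    (v' - u') / (v - u) * u + (v * u' - u * v') / (v - u) = u' := by
  field_simp [sub_ne_zero.mpr huv.symm]
  ring

theorem affine_apply_right {u v u' v' : ℝ} (huv : u ≠ v) :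
    (v' - u') / (v - u) * v + (v * u' - u * v') / (v - u) = v' := by
  field_simp [sub_ne_zero.mpr huv.symm]
  ring

noncomputable def pieceSup (x : ℕ → ℝ) (N : ℕ) (F : ℕ → ℝ → ℝ) : ℝ :=
  sSup {r : ℝ | ∃ m, 1 ≤ m ∧ m ≤ N ∧ ∃ s ∈ Ioo (x (m - 1)) (x m), r = |F m s|}

section Pieces

variable {x : ℕ → ℝ} {N : ℕ} (hx : ∀ n < N, x n < x (n + 1))
include hx

theorem strictMonoOn_Iic_of_lt_add_one : StrictMonoOn x (Iic N) :=
  strictMonoOn_Iic_of_lt_succ fun m hm => by simpa using hx m hm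

theorem apply_sub_one_lt {m : ℕ} (h1 : 1 ≤ m) (hm : m ≤ N) : x (m - 1) < x m := by
  simpa [Nat.sub_add_cancel h1] using hx (m - 1) (by omega)

theorem Icc_apply_sub_one_subset_Icc {m : ℕ} (hm : m ≤ N) :
    Icc (x (m - 1)) (x m) ⊆ Icc (x 0) (x N) :=
  have hmono := (strictMonoOn_Iic_of_lt_add_one hx).monotoneOn
  Icc_subset_Icc (hmono (by simp) (by simp; omega) (Nat.zero_le _))
    (hmono (by simpa using hm) (by simp) hm)

theorem exists_mem_Icc_apply_sub_one (hN : 1 ≤ N) {s : ℝ} (hs : s ∈ Icc (x 0) (x N)) :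
    ∃ m, 1 ≤ m ∧ m ≤ N ∧ s ∈ Icc (x (m - 1)) (x m) := by
  induction N, hN using Nat.le_induction with
  | base => exact ⟨1, le_rfl, le_rfl, hs⟩
  | succ N hN ih =>
    rcases le_or_gt s (x N) with hsN | hsN
    · obtain ⟨m, h1, hm, hsm⟩ := ih (fun n hn => hx n (by omega)) ⟨hs.1, hsN⟩
      exact ⟨m, h1, by omega, hsm⟩
    · exact ⟨N + 1, by omega, le_rfl, hsN.le, hs.2⟩

theorem bddAbove_pieceSet {F : ℕ → ℝ → ℝ} (hF : ∀ m, ContinuousOn (F m) (Icc (x 0) (x N))) :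
    BddAbove {r : ℝ | ∃ m, 1 ≤ m ∧ m ≤ N ∧ ∃ s ∈ Ioo (x (m - 1)) (x m), r = |F m s|} := by
  refine ((finite_Iic N).bddAbove_biUnion.mpr fun m _ =>
    isCompact_Icc.bddAbove_image (hF m).abs).mono ?_
  rintro _ ⟨m, -, hm, s, hs, rfl⟩
  exact mem_biUnion (mem_Iic.mpr hm)
    ⟨s, Icc_apply_sub_one_subset_Icc hx hm (Ioo_subset_Icc_self hs), rfl⟩

theorem abs_le_pieceSup {F : ℕ → ℝ → ℝ} (hF : ∀ m, ContinuousOn (F m) (Icc (x 0) (x N)))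
    {m : ℕ} (h1 : 1 ≤ m) (hm : m ≤ N) {s : ℝ} (hs : s ∈ Icc (x (m - 1)) (x m)) :
    |F m s| ≤ pieceSup x N F := by
  have hlt := apply_sub_one_lt hx h1 hm
  refine ContinuousWithinAt.closure_le (f := fun u => |F m u|) (g := fun _ => pieceSup x N F)
    (by rwa [closure_Ioo hlt.ne]) ?_ continuousWithinAt_const
    fun u hu => le_csSup (bddAbove_pieceSet hx hF) ⟨m, h1, hm, u, hu, rfl⟩
  exact ((hF m).abs s (Icc_apply_sub_one_subset_Icc hx hm hs)).mono
    (Ioo_subset_Icc_self.trans (Icc_apply_sub_one_subset_Icc hx hm))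

theorem pieceSup_sub_le (hN : 1 ≤ N) {g w : ℝ → ℝ} {F : ℕ → ℝ → ℝ}
    (hg : ContinuousOn g (Icc (x 0) (x N))) (hF : ∀ m, ContinuousOn (F m) (Icc (x 0) (x N)))
    {M A κ : ℝ} (hw : ∀ s ∈ Icc (x 0) (x N), |w s| ≤ M) (hA : 0 ≤ A) (hAκ : A < κ)
    (hself : ∀ m, 1 ≤ m → m ≤ N → ∀ u ∈ Ioo (x (m - 1)) (x m),
      ∃ s ∈ Icc (x 0) (x N), κ * |g u - F m u| ≤ A * |g s - w s|) :
    pieceSup x N (fun m u => g u - F m u) ≤ A / (κ - A) * (pieceSup x N F + M) := by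
  set E := pieceSup x N (fun m u => g u - F m u)
  set S := pieceSup x N F
  have hgF : ∀ m, ContinuousOn (fun u => g u - F m u) (Icc (x 0) (x N)) := fun m => hg.sub (hF m)
  have hbound : ∀ s ∈ Icc (x 0) (x N), |g s - w s| ≤ E + S + M := by
    intro s hs
    obtain ⟨m, h1, hm, hsm⟩ := exists_mem_Icc_apply_sub_one hx hN hs
    linarith [abs_sub_le (g s) (F m s) (w s), abs_sub (F m s) (w s), hw s hs,
      abs_le_pieceSup hx hgF h1 hm hsm, abs_le_pieceSup hx hF h1 hm hsm]
  have hκ : 0 < κ := hA.trans_lt hAκ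
  obtain ⟨u₁, hu₁⟩ := nonempty_Ioo.mpr (apply_sub_one_lt hx le_rfl hN)
  have hE : E ≤ A * (E + S + M) / κ := by
    refine csSup_le ⟨_, 1, le_rfl, hN, u₁, hu₁, rfl⟩ ?_
    rintro _ ⟨m, h1, hm, u, hu, rfl⟩
    obtain ⟨s, hs, hκs⟩ := hself m h1 hm u hu
    rw [le_div_iff₀ hκ, mul_comm]
    exact hκs.trans (mul_le_mul_of_nonneg_left (hbound s hs) hA)
  rw [le_div_iff₀ hκ] at hE
  rw [div_mul_eq_mul_div, le_div_iff₀ (sub_pos.mpr hAκ)]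
  linarith

theorem abs_iteratedDerivWithin_sub_le_of_functional_eq (hN : 1 ≤ N) {a b α : ℕ → ℝ}
    (himage : ∀ m, 1 ≤ m → m ≤ N →
      (fun t => a m * t + b m) '' Icc (x 0) (x N) = Icc (x (m - 1)) (x m))
    {n : ℕ} {ℓ : ℝ → ℝ} (hℓ : ContDiffOn ℝ n ℓ (Icc (x 0) (x N))) {Ψ : ℕ → ℝ[X]} {W : ℝ[X]}
    (hfe : ∀ m, 1 ≤ m → m ≤ N → ∀ t ∈ Icc (x 0) (x N),
      ℓ (a m * t + b m) = α m * ℓ t + ((Ψ m).eval (a m * t + b m) - α m * W.eval t))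
    {κ A M : ℝ} (hκ : ∀ m, 1 ≤ m → m ≤ N → κ ≤ a m ^ n)
    (hα : ∀ m, 1 ≤ m → m ≤ N → |α m| ≤ A) (hAκ : A < κ)
    (hW : ∀ t ∈ Icc (x 0) (x N), |(derivative^[n] W).eval t| ≤ M)
    {m : ℕ} (h1 : 1 ≤ m) (hm : m ≤ N) {t : ℝ} (ht : t ∈ Ioo (x (m - 1)) (x m)) :
    |iteratedDerivWithin n ℓ (Icc (x 0) (x N)) t - (derivative^[n] (Ψ m)).eval t| ≤
      A / (κ - A) * (pieceSup x N (fun m t => (derivative^[n] (Ψ m)).eval t) + M) := by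
  have hUD : UniqueDiffOn ℝ (Icc (x 0) (x N)) :=
    uniqueDiffOn_Icc ((strictMonoOn_Iic_of_lt_add_one hx) (by simp) (by simp) (by omega))
  have hA : 0 ≤ A := (abs_nonneg _).trans (hα 1 le_rfl hN)
  have hF : ∀ m, ContinuousOn (fun t => (derivative^[n] (Ψ m)).eval t) (Icc (x 0) (x N)) :=
    fun m => (Polynomial.continuous _).continuousOn
  have hg := hℓ.continuousOn_iteratedDerivWithin le_rfl hUD
  refine (abs_le_pieceSup hx (fun m => hg.sub (hF m)) h1 hm (Ioo_subset_Icc_self ht)).trans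
    (pieceSup_sub_le hx hN hg hF hW hA hAκ fun m h1 hm u hu => ?_)
  obtain ⟨s, hs, rfl⟩ : u ∈ (fun t => a m * t + b m) '' Icc (x 0) (x N) :=
    himage m h1 hm ▸ Ioo_subset_Icc_self hu
  have hmaps : MapsTo (fun t => a m * t + b m) (Icc (x 0) (x N)) (Icc (x 0) (x N)) :=
    fun t ht => Icc_apply_sub_one_subset_Icc hx hm (himage m h1 hm ▸ mem_image_of_mem _ ht)
  have hpow : 0 ≤ a m ^ n := (hA.trans hAκ.le).trans (hκ m h1 hm)
  refine ⟨s, hs, ?_⟩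
  calc κ * |_| ≤ a m ^ n * |_| := mul_le_mul_of_nonneg_right (hκ m h1 hm) (abs_nonneg _)
    _ = |α m| * |_| := by
      rw [← abs_of_nonneg hpow, ← abs_mul, ← abs_mul,
        iteratedDerivWithin_sub_eval_comp_mul_add hUD hℓ hmaps (hfe m h1 hm) hs]
    _ ≤ A * |_| := mul_le_mul_of_nonneg_right (hα m h1 hm) (abs_nonneg _)

end Pieces

theorem lidstone_FIF_derivative_vs_classical_general (Λ : ℕ → ℝ → ℝ) (hΛ : LidstoneProp Λ)
    (p N : ℕ) (hN : 1 ≤ N)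
    (x : ℕ → ℝ) (hx : ∀ n < N, x n < x (n + 1))
    (y : ℕ → ℕ → ℝ)
    (k : ℕ) (hk2 : k ≤ p)
    (L : ℕ → ℝ → ℝ)
    (hL : ∀ n t, L n t = ((x n - x (n - 1)) / (x N - x 0)) * t +
      (x N * x (n - 1) - x 0 * x n) / (x N - x 0))
    (α : ℕ → ℝ)
    (q : ℕ → ℝ → ℝ)
    (hq : ∀ n, 1 ≤ n → n ≤ N →
      (∃ P : Polynomial ℝ, P.natDegree ≤ 2 * p + 1 ∧ ∀ t, q n t = P.eval t) ∧
      ∀ l ≤ p,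
        iteratedDeriv (2 * l) (q n) (x 0) =
          ((x n - x (n - 1)) / (x N - x 0)) ^ (2 * l) * y (n - 1) l - α n * y 0 l ∧
        iteratedDeriv (2 * l) (q n) (x N) =
          ((x n - x (n - 1)) / (x N - x 0)) ^ (2 * l) * y n l - α n * y N l)
    (μ ρ Aα : ℝ)
    (hμ : μ = (Finset.Icc 1 N).inf' (Finset.nonempty_Icc.mpr hN)
      (fun n => (x n - x (n - 1)) / (x N - x 0)))
    (hρ : ρ = (Finset.range (p + 1)).sup'
      (Finset.nonempty_range_iff.mpr p.succ_ne_zero)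
      (fun j => max |y 0 j| |y N j|))
    (hAα : Aα = (Finset.Icc 1 N).sup' (Finset.nonempty_Icc.mpr hN)
      (fun n => |α n|))
    (hAμ : Aα < μ ^ (2 * k))
    (ℓ : ℝ → ℝ)
    (hℓsmooth : ContDiffOn ℝ (2 * p) ℓ (Set.Icc (x 0) (x N)))
    (hℓ : ∀ n, 1 ≤ n → n ≤ N → ∀ t ∈ Set.Icc (x 0) (x N),
      ℓ (L n t) = α n * ℓ t + q n t)
    (ψ : ℕ → ℝ → ℝ)
    (hψ : ∀ n t, ψ n t = ∑ l ∈ Finset.range (p + 1),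
      (y (n - 1) l * Λ l ((x n - t) / (x n - x (n - 1))) +
        y n l * Λ l ((t - x (n - 1)) / (x n - x (n - 1)))) *
        (x n - x (n - 1)) ^ (2 * l)) :
    ∀ n, 1 ≤ n → n ≤ N → ∀ t ∈ Set.Ioo (x (n - 1)) (x n),
      |iteratedDerivWithin (2 * k) ℓ (Set.Icc (x 0) (x N)) t -
          iteratedDeriv (2 * k) (ψ n) t| ≤
        (Aα / (μ ^ (2 * k) - Aα)) *
          (sSup {r : ℝ | ∃ m, 1 ≤ m ∧ m ≤ N ∧
              ∃ s ∈ Set.Ioo (x (m - 1)) (x m), r = |iteratedDeriv (2 * k) (ψ m) s|} +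
            (2 * ρ * Real.pi / 3) *
              ∑ l ∈ Finset.range (p - k + 1), ((x N - x 0) / Real.pi) ^ (2 * l)) := by
  obtain ⟨P, hP, rfl⟩ := hΛ.exists_isLidstoneFamily
  have hx0N : x 0 < x N := strictMonoOn_Iic_of_lt_add_one hx (by simp) (by simp) (by omega)
  set a : ℕ → ℝ := fun m => (x m - x (m - 1)) / (x N - x 0)
  set b : ℕ → ℝ := fun m => (x N * x (m - 1) - x 0 * x m) / (x N - x 0)
  set Ψ : ℕ → ℝ[X] := fun m => lidstoneInterp P p (x (m - 1)) (x m) (y (m - 1)) (y m)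
  set W := lidstoneInterp P p (x 0) (x N) (y 0) (y N)
  obtain rfl : ψ = fun m t => (Ψ m).eval t := funext₂ fun m t => by rw [hψ, eval_lidstoneInterp]
  have hq' (m : ℕ) (h1 : 1 ≤ m) (hm : m ≤ N) (t : ℝ) :
      q m t = (Ψ m).eval (a m * t + b m) - α m * W.eval t :=
    eq_eval_lidstoneInterp_comp_sub hP (hq m h1 hm).1 (hq m h1 hm).2 hx0N.ne
      (apply_sub_one_lt hx h1 hm).ne (affine_apply_left hx0N.ne) (affine_apply_right hx0N.ne) t
  have ha (m : ℕ) (h1 : 1 ≤ m) (hm : m ≤ N) : 0 < a m :=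
    div_pos (sub_pos.mpr (apply_sub_one_lt hx h1 hm)) (sub_pos.mpr hx0N)
  have hμ0 : 0 ≤ μ := hμ ▸ Finset.le_inf' _ _ fun m hm =>
    (ha m (Finset.mem_Icc.mp hm).1 (Finset.mem_Icc.mp hm).2).le
  have hρy (j : ℕ) (hj : j ≤ p) : max |y 0 j| |y N j| ≤ ρ :=
    hρ ▸ Finset.le_sup' (fun j => max |y 0 j| |y N j|) (Finset.mem_range.mpr (by omega))
  simp only [iteratedDeriv_eval_eq]
  intro n hn1 hnN t ht
  exact abs_iteratedDerivWithin_sub_le_of_functional_eq hx hN (a := a) (b := b)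
    (fun m h1 hm => by
      rw [image_affine_Icc' (ha m h1 hm), affine_apply_left hx0N.ne, affine_apply_right hx0N.ne])
    (hℓsmooth.of_le (by exact_mod_cast (by omega : 2 * k ≤ 2 * p)))
    (fun m h1 hm s hs => by have := hℓ m h1 hm s hs; rwa [hL, hq' m h1 hm] at this)
    (fun m h1 hm => pow_le_pow_left₀ hμ0 (hμ ▸ Finset.inf'_le _ (Finset.mem_Icc.mpr ⟨h1, hm⟩)) _)
    (fun m h1 hm => hAα ▸ Finset.le_sup' (fun n => |α n|) (Finset.mem_Icc.mpr ⟨h1, hm⟩)) hAμ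
    (fun s hs => abs_eval_iterate_derivative_lidstoneInterp_le hP hx0N
      (fun l hl => (le_max_left _ _).trans (hρy l hl))
      (fun l hl => (le_max_right _ _).trans (hρy l hl)) hk2 hs)
    hn1 hnN ht

/-- Error between the even-order derivatives of the Lidstone FIF `ℓ_α` and those
of the classical Lidstone interpolation function `φ` (given on each open
subinterval by the derivatives of the polynomial piece `ψ n`): for `1 ≤ k ≤ p`,
`max_n sup_{(x (n-1), x n)} |ℓ_α^(2k) - φ^(2k)| ≤
 (|α|_∞ / (μ^(2k) - |α|_∞)) (max_n sup_{(x (n-1), x n)} |φ^(2k)| + M_{2k,2p})`. -/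
theorem lidstone_FIF_derivative_vs_classical (Λ : ℕ → ℝ → ℝ) (hΛ : LidstoneProp Λ)
    (p N : ℕ) (hp : 1 ≤ p) (hN : 1 ≤ N)
    (x : ℕ → ℝ) (hx : ∀ n < N, x n < x (n + 1))
    (y : ℕ → ℕ → ℝ)
    (k : ℕ) (hk1 : 1 ≤ k) (hk2 : k ≤ p)
    (L : ℕ → ℝ → ℝ)
    (hL : ∀ n t, L n t = ((x n - x (n - 1)) / (x N - x 0)) * t +
      (x N * x (n - 1) - x 0 * x n) / (x N - x 0))
    (α : ℕ → ℝ)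
    (hα : ∀ n, 1 ≤ n → n ≤ N →
      |α n| < ((x n - x (n - 1)) / (x N - x 0)) ^ (2 * p))
    (q : ℕ → ℝ → ℝ)
    (hq : ∀ n, 1 ≤ n → n ≤ N →
      (∃ P : Polynomial ℝ, P.natDegree ≤ 2 * p + 1 ∧ ∀ t, q n t = P.eval t) ∧
      ∀ l ≤ p,
        iteratedDeriv (2 * l) (q n) (x 0) =
          ((x n - x (n - 1)) / (x N - x 0)) ^ (2 * l) * y (n - 1) l - α n * y 0 l ∧
        iteratedDeriv (2 * l) (q n) (x N) =
          ((x n - x (n - 1)) / (x N - x 0)) ^ (2 * l) * y n l - α n * y N l)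
    (μ ρ Aα : ℝ)
    (hμ : μ = (Finset.Icc 1 N).inf' (Finset.nonempty_Icc.mpr hN)
      (fun n => (x n - x (n - 1)) / (x N - x 0)))
    (hρ : ρ = (Finset.range (p + 1)).sup'
      (Finset.nonempty_range_iff.mpr p.succ_ne_zero)
      (fun j => max |y 0 j| |y N j|))
    (hAα : Aα = (Finset.Icc 1 N).sup' (Finset.nonempty_Icc.mpr hN)
      (fun n => |α n|))
    (hAμ : Aα < μ ^ (2 * k))
    (ℓ : ℝ → ℝ)
    (hℓsmooth : ContDiffOn ℝ (2 * p) ℓ (Set.Icc (x 0) (x N)))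
    (hℓ : ∀ n, 1 ≤ n → n ≤ N → ∀ t ∈ Set.Icc (x 0) (x N),
      ℓ (L n t) = α n * ℓ t + q n t)
    (φ : ℝ → ℝ) (ψ : ℕ → ℝ → ℝ)
    (hψ : ∀ n t, ψ n t = ∑ l ∈ Finset.range (p + 1),
      (y (n - 1) l * Λ l ((x n - t) / (x n - x (n - 1))) +
        y n l * Λ l ((t - x (n - 1)) / (x n - x (n - 1)))) *
        (x n - x (n - 1)) ^ (2 * l))
    (hφcont : ContinuousOn φ (Set.Icc (x 0) (x N)))
    (hφ : ∀ n, 1 ≤ n → n ≤ N → ∀ t ∈ Set.Icc (x (n - 1)) (x n), φ t = ψ n t) :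
    ∀ n, 1 ≤ n → n ≤ N → ∀ t ∈ Set.Ioo (x (n - 1)) (x n),
      |iteratedDerivWithin (2 * k) ℓ (Set.Icc (x 0) (x N)) t -
          iteratedDeriv (2 * k) (ψ n) t| ≤
        (Aα / (μ ^ (2 * k) - Aα)) *
          (sSup {r : ℝ | ∃ m, 1 ≤ m ∧ m ≤ N ∧
              ∃ s ∈ Set.Ioo (x (m - 1)) (x m), r = |iteratedDeriv (2 * k) (ψ m) s|} +
            (2 * ρ * Real.pi / 3) *
              ∑ l ∈ Finset.range (p - k + 1), ((x N - x 0) / Real.pi) ^ (2 * l)) :=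
  lidstone_FIF_derivative_vs_classical_general Λ hΛ p N hN x hx y k hk2 L hL α q hq μ ρ Aα hμ hρ hAα
    hAμ ℓ hℓsmooth hℓ ψ hψ
end

section
/- Let p ≥ 1, let g : [x_0,x_N] → ℝ be 2p-times continuously differentiable, and let k be an integer with 1 ≤ k ≤ p. Then there exists a constant C > 0, depending only on g, p, k, x_0 and x_N, with the following property: for every integer N ≥ 2, taking the uniform partition x_n = x_0 + n(x_N − x_0)/N and the data y_{n,2k} = g^{(2k)}(x_n) (0 ≤ n ≤ N, 0 ≤ k ≤ p), every scaling vector α with max_n |α_n| ≤ (1/2) N^{−2p}, and every 2p-times continuously differentiable function ℓ_α on [x_0,x_N] satisfying ℓ_α(L_n(x)) = α_n ℓ_α(x) + q_n(α_n, x) for all x ∈ [x_0,x_N] and 1 ≤ n ≤ N, one has sup_{x ∈ [x_0,x_N]} |g^{(2k)}(x) − ℓ_α^{(2k)}(x)| ≤ C · N^{−(2p−2k)}. -/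
/-!
Differentiating `ℓ (L_n u) = α_n ℓ u + q_n u` gives
`N^(-m) ℓ^(m) (L_n u) = α_n ℓ^(m) u + q_n^(m) u` for `m ≤ 2p`. At the two ends of the cells,
the conditions on `q_n` and `|α_n| < N^(-2l)` force `ℓ^(2l) = g^(2l)` at every node. For
`m = 2p` the polynomial `q_n^(2p)` is affine, and comparing with a maximum point of `|ℓ^(2p)|`
gives `|ℓ^(2p)| ≤ 3 G` with `G` a bound of `|g^(2p)|`. So the error `e = g - ℓ` has
`|e^(2p)| ≤ 4 G` and even derivatives vanishing at the nodes; by Rolle its odd derivatives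
vanish in every cell, and descending from order `2p` each order costs a factor `(b - a) / N`.
-/

open Set

theorem exists_cell_mem_Icc (x : ℕ → ℝ) {N : ℕ} (hN : 0 < N) {t : ℝ}
    (ht : t ∈ Icc (x 0) (x N)) : ∃ n, 1 ≤ n ∧ n ≤ N ∧ t ∈ Icc (x (n - 1)) (x n) := by
  induction N with
  | zero => omega
  | succ N ih =>
    rcases Nat.eq_zero_or_pos N with rfl | hN
    · exact ⟨1, le_rfl, le_rfl, ht⟩
    rcases le_or_gt t (x N) with htN | htN
    · obtain ⟨n, hn1, hnN, hn⟩ := ih hN ⟨ht.1, htN⟩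
      exact ⟨n, hn1, hnN.trans N.le_succ, hn⟩
    · exact ⟨N + 1, by omega, le_rfl, htN.le, ht.2⟩

theorem iteratedDerivWithin_comp_mul_add_s15 {𝕜 F : Type*} [NontriviallyNormedField 𝕜]
    [NormedAddCommGroup F] [NormedSpace 𝕜 F] {f : 𝕜 → F} {s t : Set 𝕜} {c d : 𝕜}
    {M : ℕ} (hs : UniqueDiffOn 𝕜 s) (ht : UniqueDiffOn 𝕜 t)
    (hst : MapsTo (fun u => c * u + d) s t)
    (hf : ContDiffOn 𝕜 M f t) {m : ℕ} (hm : m ≤ M) {u : 𝕜} (hu : u ∈ s) :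
    iteratedDerivWithin m (fun v => f (c * v + d)) s u =
      c ^ m • iteratedDerivWithin m f t (c * u + d) := by
  induction m generalizing u with
  | zero => simp
  | succ m ih =>
    have hA : HasDerivAt (fun v => c * v + d) c u := by
      simpa using ((hasDerivAt_id u).const_mul c).add_const d
    have hdiff : DifferentiableWithinAt 𝕜 (iteratedDerivWithin m f t) t (c * u + d) :=
      hf.differentiableOn_iteratedDerivWithin (by exact_mod_cast hm) ht _ (hst hu)
    have hcomp : DifferentiableWithinAt 𝕜 (fun v => iteratedDerivWithin m f t (c * v + d)) s u :=
      DifferentiableWithinAt.comp (g := iteratedDerivWithin m f t) u hdiff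
        hA.differentiableAt.differentiableWithinAt hst
    rw [iteratedDerivWithin_succ,
      derivWithin_congr (fun v hv => ih (by omega) hv) (ih (by omega) hu),
      derivWithin_fun_const_smul _ hcomp, ← Function.comp_def,
      derivWithin.scomp u hdiff hA.differentiableAt.differentiableWithinAt hst,
      hA.differentiableAt.derivWithin (hs u hu), hA.deriv, ← iteratedDerivWithin_succ,
      smul_smul, pow_succ]

theorem Polynomial.iteratedDeriv_eval_eq_s15 {𝕜 : Type*} [NontriviallyNormedField 𝕜]
    (P : Polynomial 𝕜) (m : ℕ) :
    iteratedDeriv m (fun t => P.eval t) = fun t => (Polynomial.derivative^[m] P).eval t := by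
  induction m with
  | zero => simp
  | succ m ih =>
    rw [iteratedDeriv_succ, ih]
    funext t
    rw [Function.iterate_succ_apply']
    exact Polynomial.deriv _

theorem Polynomial.abs_eval_le_max_of_natDegree_le_one {Q : Polynomial ℝ} (hQ : Q.natDegree ≤ 1)
    {a b t : ℝ} (ht : t ∈ Icc a b) : |Q.eval t| ≤ max |Q.eval a| |Q.eval b| := by
  obtain ⟨c, d, rfl⟩ := Polynomial.exists_eq_X_add_C_of_natDegree_le_one hQ
  have hconv : ConvexOn ℝ univ fun u : ℝ => |c * u + d| := by
    refine ⟨convex_univ, fun u _ v _ μ ν hμ hν hμν => ?_⟩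
    calc |c * (μ • u + ν • v) + d| = |μ * (c * u + d) + ν * (c * v + d)| := by
          congr 1; simp only [smul_eq_mul]; linear_combination (-d) * hμν
      _ ≤ μ * |c * u + d| + ν * |c * v + d| := by
          refine (abs_add_le _ _).trans_eq ?_
          rw [abs_mul, abs_mul, abs_of_nonneg hμ, abs_of_nonneg hν]
  simpa using hconv.le_on_segment (mem_univ a) (mem_univ b)
    (by rwa [segment_eq_Icc (ht.1.trans ht.2)])

theorem abs_le_two_mul_of_forall_exists_abs_le_half_add {X : Type*} [TopologicalSpace X]
    {K : Set X} (hK : IsCompact K) {φ : X → ℝ} (hφ : ContinuousOn φ K) {B : ℝ}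
    (h : ∀ t ∈ K, ∃ s ∈ K, |φ t| ≤ |φ s| / 2 + B) {t : X} (ht : t ∈ K) :
    |φ t| ≤ 2 * B := by
  obtain ⟨t₀, ht₀, hmax⟩ :=
    hK.exists_isMaxOn ⟨t, ht⟩ (continuous_abs.comp_continuousOn hφ)
  obtain ⟨s, hs, hts⟩ := h t₀ ht₀
  have hs_le : |φ s| ≤ |φ t₀| := hmax hs
  have ht_le : |φ t| ≤ |φ t₀| := hmax ht
  linarith

theorem exists_derivWithin_eq_zero_of_Icc_subset {φ : ℝ → ℝ} {s : Set ℝ} {u v : ℝ}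
    (huv : u < v) (hsub : Icc u v ⊆ s) (hφ : DifferentiableOn ℝ φ s) (h : φ u = φ v) :
    ∃ z ∈ Ioo u v, derivWithin φ s z = 0 := by
  obtain ⟨z, hz, hz0⟩ := exists_deriv_eq_zero huv (hφ.continuousOn.mono hsub) h
  have hs : s ∈ nhds z := Filter.mem_of_superset (Icc_mem_nhds hz.1 hz.2) hsub
  exact ⟨z, hz, by rwa [derivWithin_of_mem_nhds hs]⟩

theorem abs_le_mul_of_forall_cell_exists_zero {f : ℝ → ℝ} {x : ℕ → ℝ} (hx : Monotone x)
    {N : ℕ} (hN : 0 < N) {B h : ℝ} (hf : DifferentiableOn ℝ f (Icc (x 0) (x N)))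
    (hf' : ∀ t ∈ Icc (x 0) (x N), |derivWithin f (Icc (x 0) (x N)) t| ≤ B)
    (hh : ∀ n, 1 ≤ n → n ≤ N → x n - x (n - 1) ≤ h)
    (hzero : ∀ n, 1 ≤ n → n ≤ N → ∃ z ∈ Icc (x (n - 1)) (x n), f z = 0) :
    ∀ t ∈ Icc (x 0) (x N), |f t| ≤ B * h := by
  intro t ht
  obtain ⟨n, hn1, hnN, htn⟩ := exists_cell_mem_Icc x hN ht
  obtain ⟨z, hz, hfz⟩ := hzero n hn1 hnN
  have hcell : Icc (x (n - 1)) (x n) ⊆ Icc (x 0) (x N) :=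
    Icc_subset_Icc (hx (Nat.zero_le _)) (hx hnN)
  have hlip :=
    Convex.norm_image_sub_le_of_norm_derivWithin_le hf hf' (convex_Icc _ _) (hcell hz) ht
  have hB : 0 ≤ B := (abs_nonneg _).trans (hf' t ht)
  have htz : |t - z| ≤ h := by
    rw [abs_sub_le_iff]; constructor <;> linarith [hh n hn1 hnN, htn.1, htn.2, hz.1, hz.2]
  simp only [Real.norm_eq_abs, hfz, sub_zero] at hlip
  exact hlip.trans (mul_le_mul_of_nonneg_left htz hB)

section Descent
variable {f : ℝ → ℝ} {x : ℕ → ℝ} {a b : ℝ} {N p : ℕ}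

theorem exists_iteratedDerivWithin_eq_zero_of_even_zero_at_nodes (hx : StrictMono x)
    (hx0 : x 0 = a) (hxN : x N = b) (hf : ContDiffOn ℝ (2 * p) f (Icc a b))
    (hnodes : ∀ l ≤ p, ∀ n ≤ N, iteratedDerivWithin (2 * l) f (Icc a b) (x n) = 0)
    {j : ℕ} (hj : j < 2 * p) {n : ℕ} (hn1 : 1 ≤ n) (hnN : n ≤ N) :
    ∃ z ∈ Icc (x (n - 1)) (x n), iteratedDerivWithin j f (Icc a b) z = 0 := by
  subst hx0 hxN
  obtain ⟨l, rfl | rfl⟩ := Nat.even_or_odd' j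
  · exact ⟨x n, right_mem_Icc.2 (hx.monotone (by omega)), hnodes l (by omega) n hnN⟩
  · have hI : UniqueDiffOn ℝ (Icc (x 0) (x N)) := uniqueDiffOn_Icc (hx (by omega))
    obtain ⟨z, hz, hz0⟩ := exists_derivWithin_eq_zero_of_Icc_subset (hx (by omega : n - 1 < n))
      (Icc_subset_Icc (hx.monotone (Nat.zero_le _)) (hx.monotone hnN))
      (hf.differentiableOn_iteratedDerivWithin (m := 2 * l) (by norm_cast; omega) hI)
      (by rw [hnodes l (by omega) _ (by omega), hnodes l (by omega) n hnN])
    exact ⟨z, Ioo_subset_Icc_self hz, by rwa [iteratedDerivWithin_succ]⟩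

theorem abs_iteratedDerivWithin_le_of_even_zero_at_nodes (hx : StrictMono x) (hN : 0 < N)
    (hx0 : x 0 = a) (hxN : x N = b) {h M : ℝ} (hf : ContDiffOn ℝ (2 * p) f (Icc a b))
    (hh : ∀ n, 1 ≤ n → n ≤ N → x n - x (n - 1) ≤ h)
    (hnodes : ∀ l ≤ p, ∀ n ≤ N, iteratedDerivWithin (2 * l) f (Icc a b) (x n) = 0)
    (hM : ∀ t ∈ Icc a b, |iteratedDerivWithin (2 * p) f (Icc a b) t| ≤ M)
    {j : ℕ} (hj : j ≤ 2 * p) :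
    ∀ t ∈ Icc a b, |iteratedDerivWithin j f (Icc a b) t| ≤ M * h ^ (2 * p - j) := by
  subst hx0 hxN
  induction hj using Nat.decreasingInduction with
  | self => simpa using hM
  | of_succ j hj ih =>
    have hI : UniqueDiffOn ℝ (Icc (x 0) (x N)) := uniqueDiffOn_Icc (hx hN)
    have hpow : M * h ^ (2 * p - j) = M * h ^ (2 * p - (j + 1)) * h := by
      rw [mul_assoc, ← pow_succ]; congr 2; omega
    rw [hpow]
    refine abs_le_mul_of_forall_cell_exists_zero hx.monotone hN
      (hf.differentiableOn_iteratedDerivWithin (by exact_mod_cast hj) hI)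
      (fun t ht => by rw [← iteratedDerivWithin_succ]; exact ih t ht) hh
      (fun n hn1 hnN =>
        exists_iteratedDerivWithin_eq_zero_of_even_zero_at_nodes hx rfl rfl hf hnodes hj hn1 hnN)

end Descent

noncomputable def uniformNode (a b : ℝ) (N n : ℕ) : ℝ := a + n * (b - a) / N

section UniformNode
variable {a b : ℝ} {N : ℕ}

@[simp] theorem uniformNode_zero : uniformNode a b N 0 = a := by simp [uniformNode]

theorem uniformNode_self (hN : N ≠ 0) : uniformNode a b N N = b := by
  have hN' : (N : ℝ) ≠ 0 := Nat.cast_ne_zero.2 hN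
  simp only [uniformNode]
  field_simp
  ring

theorem uniformNode_sub_pred {n : ℕ} (hn : 1 ≤ n) :
    uniformNode a b N n - uniformNode a b N (n - 1) = (b - a) / N := by
  simp only [uniformNode, Nat.cast_sub hn]; ring

theorem strictMono_uniformNode (hab : a < b) (hN : 0 < N) : StrictMono (uniformNode a b N) :=
  strictMono_nat_of_lt_succ fun n => by
    have := uniformNode_sub_pred (a := a) (b := b) (N := N) (by omega : 1 ≤ n + 1)
    simp only [Nat.add_sub_cancel] at this
    have : 0 < (b - a) / N := div_pos (by linarith) (by exact_mod_cast hN)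
    linarith

theorem uniformNode_mem_Icc (hab : a < b) (hN : 0 < N) {n : ℕ} (hn : n ≤ N) :
    uniformNode a b N n ∈ Icc a b := by
  have hmono := (strictMono_uniformNode hab hN).monotone
  simpa [uniformNode_self hN.ne'] using And.intro (hmono (Nat.zero_le n)) (hmono hn)

end UniformNode

noncomputable def uniformCellMap (a b : ℝ) (N n : ℕ) (u : ℝ) : ℝ :=
  (N : ℝ)⁻¹ * u + (uniformNode a b N (n - 1) - (N : ℝ)⁻¹ * a)

section UniformCellMap
variable {a b : ℝ} {N n : ℕ}

theorem uniformCellMap_left : uniformCellMap a b N n a = uniformNode a b N (n - 1) := by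
  simp [uniformCellMap]

theorem uniformCellMap_right (hN : 0 < N) (hn : 1 ≤ n) :
    uniformCellMap a b N n b = uniformNode a b N n := by
  have := uniformNode_sub_pred (a := a) (b := b) (N := N) hn
  simp only [uniformCellMap]
  field_simp at this ⊢
  linarith

theorem image_uniformCellMap (hN : 0 < N) (hn : 1 ≤ n) :
    uniformCellMap a b N n '' Icc a b =
      Icc (uniformNode a b N (n - 1)) (uniformNode a b N n) := by
  rw [show uniformCellMap a b N n =
      fun u => (N : ℝ)⁻¹ * u + (uniformNode a b N (n - 1) - (N : ℝ)⁻¹ * a) from rfl,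
    image_affine_Icc' (by positivity)]
  exact congrArg₂ Icc uniformCellMap_left (uniformCellMap_right hN hn)

theorem uniformNode_slope (hab : a < b) (hN : 0 < N) (hn : 1 ≤ n) :
    (uniformNode a b N n - uniformNode a b N (n - 1)) /
      (uniformNode a b N N - uniformNode a b N 0) = (N : ℝ)⁻¹ := by
  rw [uniformNode_sub_pred hn, uniformNode_self hN.ne', uniformNode_zero]
  field_simp [sub_ne_zero.2 hab.ne']

theorem uniformCellMap_eq (hab : a < b) (hN : 0 < N) (hn : 1 ≤ n) (u : ℝ) :
    (uniformNode a b N n - uniformNode a b N (n - 1)) /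
        (uniformNode a b N N - uniformNode a b N 0) * u +
      (uniformNode a b N N * uniformNode a b N (n - 1) -
          uniformNode a b N 0 * uniformNode a b N n) /
        (uniformNode a b N N - uniformNode a b N 0) = uniformCellMap a b N n u := by
  have hstep := uniformNode_sub_pred (a := a) (b := b) (N := N) hn
  rw [uniformNode_slope hab hN hn, uniformCellMap, uniformNode_self hN.ne', uniformNode_zero,
    show uniformNode a b N n = uniformNode a b N (n - 1) + (b - a) / N by linarith]
  field_simp [sub_ne_zero.2 hab.ne']
  ring

end UniformCellMap

/-- `ℓ` is a Lidstone FIF with scaling vector `α` and polynomials `q` for the data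
`y n l = g^(2l) (x n)` on the uniform partition `x n = uniformNode a b N n`, where
`a_n = 1 / N` and `L_n = uniformCellMap a b N n` have been computed. -/
structure IsUniformLidstoneFIF (p N : ℕ) (a b : ℝ) (g ℓ : ℝ → ℝ) (α : ℕ → ℝ)
    (q : ℕ → ℝ → ℝ) : Prop where
  contDiffOn : ContDiffOn ℝ (2 * p) ℓ (Icc a b)
  comp_uniformCellMap : ∀ n, 1 ≤ n → n ≤ N → ∀ u ∈ Icc a b,
    ℓ (uniformCellMap a b N n u) = α n * ℓ u + q n u
  exists_polynomial : ∀ n, 1 ≤ n → n ≤ N →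
    ∃ P : Polynomial ℝ, P.natDegree ≤ 2 * p + 1 ∧ ∀ t, q n t = P.eval t
  iteratedDeriv_left : ∀ n, 1 ≤ n → n ≤ N → ∀ l ≤ p,
    iteratedDeriv (2 * l) (q n) a =
      (N : ℝ)⁻¹ ^ (2 * l) *
          iteratedDerivWithin (2 * l) g (Icc a b) (uniformNode a b N (n - 1)) -
        α n * iteratedDerivWithin (2 * l) g (Icc a b) a
  iteratedDeriv_right : ∀ n, 1 ≤ n → n ≤ N → ∀ l ≤ p,
    iteratedDeriv (2 * l) (q n) b =
      (N : ℝ)⁻¹ ^ (2 * l) * iteratedDerivWithin (2 * l) g (Icc a b) (uniformNode a b N n) -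
        α n * iteratedDerivWithin (2 * l) g (Icc a b) b

namespace IsUniformLidstoneFIF
variable {p N : ℕ} {a b : ℝ} {g ℓ : ℝ → ℝ} {α : ℕ → ℝ} {q : ℕ → ℝ → ℝ}

theorem iteratedDerivWithin_uniformCellMap (hF : IsUniformLidstoneFIF p N a b g ℓ α q)
    (hab : a < b) (hN : 0 < N) {n : ℕ} (hn1 : 1 ≤ n) (hnN : n ≤ N) {m : ℕ}
    (hm : m ≤ 2 * p)    {u : ℝ} (hu : u ∈ Icc a b) :
    (N : ℝ)⁻¹ ^ m * iteratedDerivWithin m ℓ (Icc a b) (uniformCellMap a b N n u) =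
      α n * iteratedDerivWithin m ℓ (Icc a b) u + iteratedDeriv m (q n) u := by
  have hI : UniqueDiffOn ℝ (Icc a b) := uniqueDiffOn_Icc hab
  have hmaps : MapsTo (uniformCellMap a b N n) (Icc a b) (Icc a b) := fun v hv => by
    have := image_uniformCellMap hN hn1 ▸ mem_image_of_mem (uniformCellMap a b N n) hv
    exact Icc_subset_Icc (uniformNode_mem_Icc hab hN (by omega)).1
      (uniformNode_mem_Icc hab hN hnN).2 this
  obtain ⟨P, -, hP⟩ := hF.exists_polynomial n hn1 hnN
  have hq : ContDiff ℝ m (q n) := by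
    rw [funext hP]; simpa using P.contDiff_aeval (𝕜 := ℝ) m
  have hℓ : ContDiffOn ℝ m ℓ (Icc a b) := hF.contDiffOn.of_le (by exact_mod_cast hm)
  rw [← smul_eq_mul, uniformCellMap,
    ← iteratedDerivWithin_comp_mul_add_s15 hI hI hmaps hF.contDiffOn hm hu]
  change iteratedDerivWithin m (fun v => ℓ (uniformCellMap a b N n v)) _ _ = _
  rw [iteratedDerivWithin_congr (fun v hv => hF.comp_uniformCellMap n hn1 hnN v hv) hu,
    iteratedDerivWithin_fun_add hu hI (contDiffWithinAt_const.mul (hℓ u hu))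
      hq.contDiffAt.contDiffWithinAt,
    iteratedDerivWithin_const_mul_field, iteratedDerivWithin_eq_iteratedDeriv hI hq.contDiffAt hu]

theorem iteratedDerivWithin_uniformNode (hF : IsUniformLidstoneFIF p N a b g ℓ α q)
    (hab : a < b) (hN : 0 < N)
    (hα : ∀ n, 1 ≤ n → n ≤ N → |α n| ≤ (N : ℝ)⁻¹ ^ (2 * p) / 2)
    {l : ℕ} (hl : l ≤ p) {n : ℕ} (hn : n ≤ N) :
    iteratedDerivWithin (2 * l) ℓ (Icc a b) (uniformNode a b N n) =
      iteratedDerivWithin (2 * l) g (Icc a b) (uniformNode a b N n) := by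
  set w : ℝ := (N : ℝ)⁻¹ ^ (2 * l)
  set E : ℝ → ℝ := fun t =>
    iteratedDerivWithin (2 * l) ℓ (Icc a b) t - iteratedDerivWithin (2 * l) g (Icc a b) t
  suffices E (uniformNode a b N n) = 0 from sub_eq_zero.1 this
  have hw : 0 < w := by positivity
  have hα_ne : ∀ n, 1 ≤ n → n ≤ N → w - α n ≠ 0 := fun n hn1 hnN => by
    have hpow : (N : ℝ)⁻¹ ^ (2 * p) ≤ w :=
      pow_le_pow_of_le_one (by positivity) (inv_le_one_of_one_le₀ (by exact_mod_cast hN))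
        (by omega)
    have := (le_abs_self _).trans (hα n hn1 hnN)
    linarith
  have hleft : ∀ n, 1 ≤ n → n ≤ N → w * E (uniformNode a b N (n - 1)) = α n * E a := by
    intro n hn1 hnN
    have := hF.iteratedDerivWithin_uniformCellMap hab hN hn1 hnN (by omega : 2 * l ≤ 2 * p)
      (left_mem_Icc.2 hab.le)
    rw [uniformCellMap_left, hF.iteratedDeriv_left n hn1 hnN l hl] at this
    linear_combination this
  have hright : ∀ n, 1 ≤ n → n ≤ N → w * E (uniformNode a b N n) = α n * E b := by
    intro n hn1 hnN
    have := hF.iteratedDerivWithin_uniformCellMap hab hN hn1 hnN (by omega : 2 * l ≤ 2 * p)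
      (right_mem_Icc.2 hab.le)
    rw [uniformCellMap_right hN hn1, hF.iteratedDeriv_right n hn1 hnN l hl] at this
    linear_combination this
  have hEa : E a = 0 := by
    have := hleft 1 le_rfl hN
    rw [Nat.sub_self, uniformNode_zero, ← sub_eq_zero, ← sub_mul] at this
    exact (mul_eq_zero.1 this).resolve_left (hα_ne 1 le_rfl hN)
  have hEb : E b = 0 := by
    have := hright N hN le_rfl
    rw [uniformNode_self hN.ne', ← sub_eq_zero, ← sub_mul] at this
    exact (mul_eq_zero.1 this).resolve_left (hα_ne N hN le_rfl)
  rcases Nat.eq_zero_or_pos n with rfl | hn1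
  · rwa [uniformNode_zero]
  · have := hright n hn1 hn
    rw [hEb, mul_zero] at this
    exact (mul_eq_zero.1 this).resolve_left hw.ne'

theorem abs_iteratedDeriv_le (hF : IsUniformLidstoneFIF p N a b g ℓ α q)
    (hab : a < b) (hN : 0 < N)
    (hα : ∀ n, 1 ≤ n → n ≤ N → |α n| ≤ (N : ℝ)⁻¹ ^ (2 * p) / 2)
    {G : ℝ} (hG : ∀ t ∈ Icc a b, |iteratedDerivWithin (2 * p) g (Icc a b) t| ≤ G)
    {n : ℕ} (hn1 : 1 ≤ n) (hnN : n ≤ N) {s : ℝ} (hs : s ∈ Icc a b) :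
    |iteratedDeriv (2 * p) (q n) s| ≤ (N : ℝ)⁻¹ ^ (2 * p) * (3 / 2 * G) := by
  set w : ℝ := (N : ℝ)⁻¹ ^ (2 * p)
  obtain ⟨P, hPdeg, hP⟩ := hF.exists_polynomial n hn1 hnN
  have hQ : iteratedDeriv (2 * p) (q n) = fun t => (Polynomial.derivative^[2 * p] P).eval t := by
    rw [funext hP]; exact P.iteratedDeriv_eval_eq_s15 _
  have hQdeg : (Polynomial.derivative^[2 * p] P).natDegree ≤ 1 :=
    (Polynomial.natDegree_iterate_derivative P _).trans (by omega)
  have hend : ∀ y z, |y| ≤ G → |z| ≤ G → |w * y - α n * z| ≤ w * (3 / 2 * G) := by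
    intro y z hy hz
    have hw : 0 ≤ w := by positivity
    calc |w * y - α n * z| ≤ |w * y| + |α n * z| := abs_sub _ _
      _ = w * |y| + |α n| * |z| := by rw [abs_mul, abs_mul, abs_of_nonneg hw]
      _ ≤ w * G + w / 2 * G := by gcongr; exact hα n hn1 hnN
      _ = w * (3 / 2 * G) := by ring
  have hleft := hF.iteratedDeriv_left n hn1 hnN p le_rfl
  have hright := hF.iteratedDeriv_right n hn1 hnN p le_rfl
  rw [hQ] at hleft hright ⊢
  beta_reduce at hleft hright
  refine (Polynomial.abs_eval_le_max_of_natDegree_le_one hQdeg hs).trans (max_le ?_ ?_)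
  · rw [hleft]
    exact hend _ _ (hG _ (uniformNode_mem_Icc hab hN (by omega))) (hG a (left_mem_Icc.2 hab.le))
  · rw [hright]
    exact hend _ _ (hG _ (uniformNode_mem_Icc hab hN hnN)) (hG b (right_mem_Icc.2 hab.le))

theorem abs_iteratedDerivWithin_le (hF : IsUniformLidstoneFIF p N a b g ℓ α q)
    (hab : a < b) (hN : 0 < N)
    (hα : ∀ n, 1 ≤ n → n ≤ N → |α n| ≤ (N : ℝ)⁻¹ ^ (2 * p) / 2)
    {G : ℝ} (hG : ∀ t ∈ Icc a b, |iteratedDerivWithin (2 * p) g (Icc a b) t| ≤ G)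
    {t : ℝ} (ht : t ∈ Icc a b) : |iteratedDerivWithin (2 * p) ℓ (Icc a b) t| ≤ 3 * G := by
  set w : ℝ := (N : ℝ)⁻¹ ^ (2 * p)
  have hw : 0 < w := by positivity
  have hcontract : ∀ t ∈ Icc a b, ∃ s ∈ Icc a b,
      |iteratedDerivWithin (2 * p) ℓ (Icc a b) t| ≤
        |iteratedDerivWithin (2 * p) ℓ (Icc a b) s| / 2 + 3 / 2 * G := by
    intro t ht
    obtain ⟨n, hn1, hnN, htn⟩ := exists_cell_mem_Icc (uniformNode a b N) hN
      (by rwa [uniformNode_zero, uniformNode_self hN.ne'])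
    obtain ⟨s, hs, rfl⟩ := (image_uniformCellMap hN hn1).symm ▸ htn
    refine ⟨s, hs, le_of_mul_le_mul_left ?_ hw⟩
    calc w * |iteratedDerivWithin (2 * p) ℓ (Icc a b) (uniformCellMap a b N n s)|
        = |α n * iteratedDerivWithin (2 * p) ℓ (Icc a b) s + iteratedDeriv (2 * p) (q n) s| := by
          rw [← hF.iteratedDerivWithin_uniformCellMap hab hN hn1 hnN le_rfl hs, abs_mul,
            abs_of_pos hw]
      _ ≤ |α n| * |iteratedDerivWithin (2 * p) ℓ (Icc a b) s| +
          |iteratedDeriv (2 * p) (q n) s| := by rw [← abs_mul]; exact abs_add_le _ _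
      _ ≤ w / 2 * |iteratedDerivWithin (2 * p) ℓ (Icc a b) s| + w * (3 / 2 * G) := by
          gcongr
          exacts [hα n hn1 hnN, hF.abs_iteratedDeriv_le hab hN hα hG hn1 hnN hs]
      _ = w * (|iteratedDerivWithin (2 * p) ℓ (Icc a b) s| / 2 + 3 / 2 * G) := by ring
  have := abs_le_two_mul_of_forall_exists_abs_le_half_add isCompact_Icc
    (hF.contDiffOn.continuousOn_iteratedDerivWithin le_rfl (uniqueDiffOn_Icc hab)) hcontract ht
  linarith

theorem abs_sub_iteratedDerivWithin_le (hF : IsUniformLidstoneFIF p N a b g ℓ α q)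
    (hab : a < b) (hN : 0 < N)
    (hα : ∀ n, 1 ≤ n → n ≤ N → |α n| ≤ (N : ℝ)⁻¹ ^ (2 * p) / 2)
    (hg : ContDiffOn ℝ (2 * p) g (Icc a b)) {G : ℝ}
    (hG : ∀ t ∈ Icc a b, |iteratedDerivWithin (2 * p) g (Icc a b) t| ≤ G)
    {k : ℕ} (hk : k ≤ p) {t : ℝ} (ht : t ∈ Icc a b) :
    |iteratedDerivWithin (2 * k) g (Icc a b) t - iteratedDerivWithin (2 * k) ℓ (Icc a b) t| ≤
      4 * G * ((b - a) / N) ^ (2 * p - 2 * k) := by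
  have hI : UniqueDiffOn ℝ (Icc a b) := uniqueDiffOn_Icc hab
  have hsub : ∀ j ≤ 2 * p, ∀ t ∈ Icc a b, iteratedDerivWithin j (g - ℓ) (Icc a b) t =
      iteratedDerivWithin j g (Icc a b) t - iteratedDerivWithin j ℓ (Icc a b) t :=
    fun j hj t ht => iteratedDerivWithin_sub ht hI ((hg t ht).of_le (by exact_mod_cast hj))
      ((hF.contDiffOn t ht).of_le (by exact_mod_cast hj))
  rw [← hsub _ (by omega) t ht]
  refine abs_iteratedDerivWithin_le_of_even_zero_at_nodes (f := g - ℓ)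
    (strictMono_uniformNode hab hN) hN
    uniformNode_zero (uniformNode_self hN.ne') (hg.sub hF.contDiffOn)
    (fun n hn1 _ => (uniformNode_sub_pred hn1).le) (fun l hl n hn => ?_) (fun s hs => ?_)
    (by omega) t ht
  · rw [hsub _ (by omega) _ (uniformNode_mem_Icc hab hN hn),
      hF.iteratedDerivWithin_uniformNode hab hN hα hl hn, sub_self]
  · rw [hsub _ le_rfl s hs]
    linarith [abs_sub _ _ |>.trans
      (add_le_add (hG s hs) (hF.abs_iteratedDerivWithin_le hab hN hα hG hs))]

end IsUniformLidstoneFIF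

theorem lidstone_FIF_derivative_convergence_general
    (p : ℕ) (a b : ℝ) (hab : a < b)
    (g : ℝ → ℝ) (hg : ContDiffOn ℝ (2 * p) g (Set.Icc a b))
    (k : ℕ) (hk2 : k ≤ p) :
    ∃ C : ℝ, 0 < C ∧
      ∀ (N : ℕ), 2 ≤ N →
      ∀ x : ℕ → ℝ, (∀ n, x n = a + n * (b - a) / N) →
      ∀ L : ℕ → ℝ → ℝ,
        (∀ n t, L n t = ((x n - x (n - 1)) / (x N - x 0)) * t +
          (x N * x (n - 1) - x 0 * x n) / (x N - x 0)) →
      ∀ α : ℕ → ℝ,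
        (∀ n, 1 ≤ n → n ≤ N → |α n| ≤ (1 / 2) * ((N : ℝ) ^ (2 * p))⁻¹) →
      ∀ q : ℕ → ℝ → ℝ,
        (∀ n, 1 ≤ n → n ≤ N →
          (∃ P : Polynomial ℝ, P.natDegree ≤ 2 * p + 1 ∧ ∀ t, q n t = P.eval t) ∧
          ∀ l ≤ p,
            iteratedDeriv (2 * l) (q n) (x 0) =
              ((x n - x (n - 1)) / (x N - x 0)) ^ (2 * l) *
                iteratedDerivWithin (2 * l) g (Set.Icc a b) (x (n - 1)) -
              α n * iteratedDerivWithin (2 * l) g (Set.Icc a b) (x 0) ∧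
            iteratedDeriv (2 * l) (q n) (x N) =
              ((x n - x (n - 1)) / (x N - x 0)) ^ (2 * l) *
                iteratedDerivWithin (2 * l) g (Set.Icc a b) (x n) -
              α n * iteratedDerivWithin (2 * l) g (Set.Icc a b) (x N)) →
      ∀ ℓ : ℝ → ℝ,
        ContDiffOn ℝ (2 * p) ℓ (Set.Icc a b) →
        (∀ n, 1 ≤ n → n ≤ N → ∀ t ∈ Set.Icc a b, ℓ (L n t) = α n * ℓ t + q n t) →
        ∀ t ∈ Set.Icc a b,
          |iteratedDerivWithin (2 * k) g (Set.Icc a b) t -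
              iteratedDerivWithin (2 * k) ℓ (Set.Icc a b) t| ≤
            C * ((N : ℝ) ^ (2 * p - 2 * k))⁻¹ := by
  obtain ⟨G, hG⟩ := isCompact_Icc.exists_bound_of_continuousOn
    (hg.continuousOn_iteratedDerivWithin le_rfl (uniqueDiffOn_Icc hab))
  refine ⟨4 * max G 1 * (b - a) ^ (2 * p - 2 * k), by
    have := sub_pos.2 hab; positivity, ?_⟩
  intro N hN x hx L hL α hα q hq ℓ hℓ hfe t ht
  obtain rfl : x = uniformNode a b N := funext hx
  have hN0 : 0 < N := by omega
  have hF : IsUniformLidstoneFIF p N a b g ℓ α q := by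
    refine ⟨hℓ, fun n hn1 hnN u hu => ?_, fun n hn1 hnN => (hq n hn1 hnN).1,
      fun n hn1 hnN l hl => ?_, fun n hn1 hnN l hl => ?_⟩
    · rw [← uniformCellMap_eq hab hN0 hn1, ← hL]; exact hfe n hn1 hnN u hu
    · have := ((hq n hn1 hnN).2 l hl).1
      rwa [uniformNode_slope hab hN0 hn1, uniformNode_zero] at this
    · have := ((hq n hn1 hnN).2 l hl).2
      rwa [uniformNode_slope hab hN0 hn1, uniformNode_self hN0.ne'] at this
  have hα' : ∀ n, 1 ≤ n → n ≤ N → |α n| ≤ (N : ℝ)⁻¹ ^ (2 * p) / 2 :=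
    fun n hn1 hnN => by rw [inv_pow]; linarith [hα n hn1 hnN]
  have := hF.abs_sub_iteratedDerivWithin_le hab hN0 hα' hg
    (fun s hs => (Real.norm_eq_abs _ ▸ hG s hs).trans (le_max_left G 1)) hk2 ht
  rwa [div_pow, div_eq_mul_inv, ← mul_assoc] at this

/-- Convergence of the even-order derivatives of the Lidstone FIF to the
corresponding derivatives of the data generating function: if `g` is `2p`-times
continuously differentiable on `[a, b]` and `1 ≤ k ≤ p`, then there is `C > 0`
such that for every `N ≥ 2`, every scaling vector with `|α n| ≤ (1/2) N^(-2p)`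
and the uniform partition `x n = a + n (b - a)/N`, any `2p`-times continuously
differentiable Lidstone FIF `ℓ_α` for the data `y n l = g^(2l) (x n)` satisfies
`‖g^(2k) - ℓ_α^(2k)‖_∞ ≤ C · N^(-(2p-2k))`. -/
theorem lidstone_FIF_derivative_convergence
    (p : ℕ) (hp : 1 ≤ p) (a b : ℝ) (hab : a < b)
    (g : ℝ → ℝ) (hg : ContDiffOn ℝ (2 * p) g (Set.Icc a b))
    (k : ℕ) (hk1 : 1 ≤ k) (hk2 : k ≤ p) :
    ∃ C : ℝ, 0 < C ∧
      ∀ (N : ℕ), 2 ≤ N →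
      ∀ x : ℕ → ℝ, (∀ n, x n = a + n * (b - a) / N) →
      ∀ L : ℕ → ℝ → ℝ,
        (∀ n t, L n t = ((x n - x (n - 1)) / (x N - x 0)) * t +
          (x N * x (n - 1) - x 0 * x n) / (x N - x 0)) →
      ∀ α : ℕ → ℝ,
        (∀ n, 1 ≤ n → n ≤ N → |α n| ≤ (1 / 2) * ((N : ℝ) ^ (2 * p))⁻¹) →
      ∀ q : ℕ → ℝ → ℝ,
        (∀ n, 1 ≤ n → n ≤ N →
          (∃ P : Polynomial ℝ, P.natDegree ≤ 2 * p + 1 ∧ ∀ t, q n t = P.eval t) ∧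
          ∀ l ≤ p,
            iteratedDeriv (2 * l) (q n) (x 0) =
              ((x n - x (n - 1)) / (x N - x 0)) ^ (2 * l) *
                iteratedDerivWithin (2 * l) g (Set.Icc a b) (x (n - 1)) -
              α n * iteratedDerivWithin (2 * l) g (Set.Icc a b) (x 0) ∧
            iteratedDeriv (2 * l) (q n) (x N) =
              ((x n - x (n - 1)) / (x N - x 0)) ^ (2 * l) *
                iteratedDerivWithin (2 * l) g (Set.Icc a b) (x n) -
              α n * iteratedDerivWithin (2 * l) g (Set.Icc a b) (x N)) →
      ∀ ℓ : ℝ → ℝ,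
        ContDiffOn ℝ (2 * p) ℓ (Set.Icc a b) →
        (∀ n, 1 ≤ n → n ≤ N → ∀ t ∈ Set.Icc a b, ℓ (L n t) = α n * ℓ t + q n t) →
        ∀ t ∈ Set.Icc a b,
          |iteratedDerivWithin (2 * k) g (Set.Icc a b) t -
              iteratedDerivWithin (2 * k) ℓ (Set.Icc a b) t| ≤
            C * ((N : ℝ) ^ (2 * p - 2 * k))⁻¹ :=
  lidstone_FIF_derivative_convergence_general p a b hab g hg k hk2
end
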